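/- arXiv:1910.02877 — 9 statements merged into one kernel-verified Lean document; each statement's English description precedes it below -/
import Mathlib

section
/- Let X be a heap. Then its ternary operation T(x,y,z) := [x,y,z] is ternary self-distributive: T(T(x,y,z),u,v) = T(T(x,u,v), T(y,u,v), T(z,u,v)) for all x,y,z,u,v ∈ X. -/
/-- The ternary operation of a heap is ternary self-distributive. -/
theorem heap_is_TSD {X : Type*} [Nonempty X] (t : X → X → X → X)
    (h0 : ∀ x y z u v : X, t (t x y z) u v = t x y (t z u v))
    (h1 : ∀ x y z u v : X, t (t x y z) u v = t x (t u z y) v)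
    (h2 : ∀ x y z u v : X, t x y (t z u v) = t x (t u z y) v)
    (hd1 : ∀ x y : X, t x x y = y)
    (hd2 : ∀ x y : X, t x y y = x) :
    ∀ x y z u v : X, t (t x y z) u v = t (t x u v) (t y u v) (t z u v) := by
  intro x y z u v
  calc t (t x y z) u v = t x y (t z u v) := h0 x y z u v
    _ = t x (t y u u) (t z u v) := by rw [hd2]
    _ = t x u (t u y (t z u v)) := (h2 x u u y (t z u v)).symm
    _ = t x u (t v v (t u y (t z u v))) := by rw [hd1]
    _ = t x u (t v (t y u v) (t z u v)) := by rw [h2 v v u y (t z u v)]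
    _ = t (t x u v) (t y u v) (t z u v) := (h0 x u v (t y u v) (t z u v)).symm
end

section
/- Let X be a set with a para-associative ternary operation [-] and A an abelian group. For any function f: X → A, the 2-cochain δ¹f defined by δ¹f(x,y,z) = f([x,y,z]) - f(x) + f(y) - f(z) satisfies both 2-cocycle conditions: δ²₍₁₎(δ¹f) = 0 and δ²₍₂₎(δ¹f) = 0, where δ²₍₁₎η(x₁,...,x₅) = η(x₁,x₂,x₃) + η([x₁,x₂,x₃],x₄,x₅) + η(x₄,x₃,x₂) - η(x₁,[x₄,x₃,x₂],x₅) and δ²₍₂₎η(x₁,...,x₅) = η(x₃,x₄,x₅) + η(x₁,x₂,[x₃,x₄,x₅]) + η(x₄,x₃,x₂) - η(x₁,[x₄,x₃,x₂],x₅). -/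
/-- Coboundaries of 1-cochains are 2-cocycles of type 1 and of type 2,
for a para-associative ternary operation. -/
theorem coboundary_is_PA_two_cocycle {X : Type*} {A : Type*} [AddCommGroup A]
    (t : X → X → X → X)
    (h0 : ∀ x y z u v : X, t (t x y z) u v = t x y (t z u v))
    (h1 : ∀ x y z u v : X, t (t x y z) u v = t x (t u z y) v)
    (h2 : ∀ x y z u v : X, t x y (t z u v) = t x (t u z y) v)
    (f : X → A) :
    let η : X → X → X → A := fun x y z => f (t x y z) - f x + f y - f z
    (∀ x₁ x₂ x₃ x₄ x₅ : X,
      η x₁ x₂ x₃ + η (t x₁ x₂ x₃) x₄ x₅ + η x₄ x₃ x₂ - η x₁ (t x₄ x₃ x₂) x₅ = 0) ∧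
    (∀ x₁ x₂ x₃ x₄ x₅ : X,
      η x₃ x₄ x₅ + η x₁ x₂ (t x₃ x₄ x₅) + η x₄ x₃ x₂ - η x₁ (t x₄ x₃ x₂) x₅ = 0) := by
  intro η
  constructor <;> intro x₁ x₂ x₃ x₄ x₅ <;> simp only [η, h1, h2] <;> abel
end

section
/- Let X be a set with a type 0 para-associative ternary operation [-] and A an abelian group. For any function f: X → A, the 2-cochain δ¹f(x,y,z) = f([x,y,z]) - f(x) + f(y) - f(z) satisfies δ²₍₀₎(δ¹f) = 0, where δ²₍₀₎η(x₁,...,x₅) = η(x₁,x₂,x₃) + η([x₁,x₂,x₃],x₄,x₅) - η(x₃,x₄,x₅) - η(x₁,x₂,[x₃,x₄,x₅]). -/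
/-- Coboundaries of 1-cochains are 2-cocycles of type 0,
for a type 0 para-associative ternary operation. -/
theorem coboundary_is_type0_two_cocycle {X : Type*} {A : Type*} [AddCommGroup A]
    (t : X → X → X → X)
    (h0 : ∀ x y z u v : X, t (t x y z) u v = t x y (t z u v))
    (f : X → A) :
    let η : X → X → X → A := fun x y z => f (t x y z) - f x + f y - f z
    ∀ x₁ x₂ x₃ x₄ x₅ : X,
      η x₁ x₂ x₃ + η (t x₁ x₂ x₃) x₄ x₅ - η x₃ x₄ x₅ - η x₁ x₂ (t x₃ x₄ x₅) = 0 := by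
  intro η x₁ x₂ x₃ x₄ x₅
  simp only [η, h0]
  abel
end

section
/- Let X be a heap, A an abelian group, and η: X³ → A a function. The cartesian product X × A with ternary operation [(x,a),(y,b),(z,c)] := ([x,y,z], a - b + c + η(x,y,z)) is a heap (satisfies type 1 and type 2 para-associativity and the degeneracy conditions) if and only if η satisfies the type 1 and type 2 heap 2-cocycle conditions and the degeneracy conditions η(x,x,y) = 0 = η(x,y,y). -/
/-- The extension `X × A` with operation
`[(x,a),(y,b),(z,c)] = ([x,y,z], a - b + c + η x y z)` satisfies type 1 and type 2
para-associativity and the degeneracy conditions if and only if `η` satisfies the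
type 1 and type 2 heap 2-cocycle conditions and the degeneracy conditions. -/
theorem heap_extension_iff_cocycle {X : Type*} {A : Type*} [AddCommGroup A] [Nonempty X]
    (t : X → X → X → X)
    (h0 : ∀ x y z u v : X, t (t x y z) u v = t x y (t z u v))
    (h1 : ∀ x y z u v : X, t (t x y z) u v = t x (t u z y) v)
    (h2 : ∀ x y z u v : X, t x y (t z u v) = t x (t u z y) v)
    (hd1 : ∀ x y : X, t x x y = y)
    (hd2 : ∀ x y : X, t x y y = x)
    (η : X → X → X → A) :
    let T : X × A → X × A → X × A → X × A :=
      fun p q r => (t p.1 q.1 r.1, p.2 - q.2 + r.2 + η p.1 q.1 r.1)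
    ((∀ p q r s w : X × A, T (T p q r) s w = T p (T s r q) w) ∧
     (∀ p q r s w : X × A, T p q (T r s w) = T p (T s r q) w) ∧
     (∀ p q : X × A, T p p q = q) ∧
     (∀ p q : X × A, T p q q = p))
    ↔
    ((∀ x₁ x₂ x₃ x₄ x₅ : X,
        η x₁ x₂ x₃ + η (t x₁ x₂ x₃) x₄ x₅ + η x₄ x₃ x₂ - η x₁ (t x₄ x₃ x₂) x₅ = 0) ∧
     (∀ x₁ x₂ x₃ x₄ x₅ : X,
        η x₃ x₄ x₅ + η x₁ x₂ (t x₃ x₄ x₅) + η x₄ x₃ x₂ - η x₁ (t x₄ x₃ x₂) x₅ = 0) ∧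
     (∀ x y : X, η x x y = 0) ∧
     (∀ x y : X, η x y y = 0)) := by
  intro T
  constructor
  · rintro ⟨H1, H2, Hd1, Hd2⟩
    refine ⟨?_, ?_, ?_, ?_⟩
    · intro x₁ x₂ x₃ x₄ x₅
      have := congrArg Prod.snd (H1 (x₁,0) (x₂,0) (x₃,0) (x₄,0) (x₅,0))
      simp only [T] at this
      linear_combination (norm := abel) this
    · intro x₁ x₂ x₃ x₄ x₅
      have := congrArg Prod.snd (H2 (x₁,0) (x₂,0) (x₃,0) (x₄,0) (x₅,0))
      simp only [T] at this
      linear_combination (norm := abel) this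
    · intro x y
      have := congrArg Prod.snd (Hd1 (x,0) (y,0))
      simp only [T] at this
      linear_combination (norm := abel) this
    · intro x y
      have := congrArg Prod.snd (Hd2 (x,0) (y,0))
      simp only [T] at this
      linear_combination (norm := abel) this
  · rintro ⟨c1, c2, cd1, cd2⟩
    refine ⟨?_, ?_, ?_, ?_⟩
    · intro p q r s w
      refine Prod.ext (h1 _ _ _ _ _) ?_
      have := c1 p.1 q.1 r.1 s.1 w.1
      simp only [T]
      linear_combination (norm := abel) this
    · intro p q r s w
      refine Prod.ext (h2 _ _ _ _ _) ?_
      have := c2 p.1 q.1 r.1 s.1 w.1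
      simp only [T]
      linear_combination (norm := abel) this
    · intro p q
      refine Prod.ext (hd1 _ _) ?_
      simp [T, cd1]
    · intro p q
      refine Prod.ext (hd2 _ _) ?_
      simp [T, cd2]
end

section
/- Let 0 → A → E → G → 0 be a short exact sequence of abelian groups (with inclusion ι and projection π), regard each group as a heap via [x,y,z] = x - y + z, and let s: G → E be a set-theoretic section of π. Define η: G³ → A by ι(η(x,y,z)) = s(x) - s(y) + s(z) - s([x,y,z]). Then η is well-defined and is a heap 2-cocycle: it satisfies the type 1 and type 2 cocycle conditions and the degeneracy conditions η(x,x,y) = 0 = η(x,y,y). -/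
/-- Given a short exact sequence `0 → A → E → G → 0` of abelian groups and a
set-theoretic section `s` of `π`, the function `η` defined by
`ι (η x y z) = s x - s y + s z - s (x - y + z)` is well defined and is a heap
2-cocycle: it satisfies the type 1 and type 2 cocycle conditions and degeneracy. -/
theorem section_gives_heap_two_cocycle {A E G : Type*}
    [AddCommGroup A] [AddCommGroup E] [AddCommGroup G]
    (ι : A →+ E) (π : E →+ G)
    (hι : Function.Injective ι) (hπ : Function.Surjective π)
    (hexact : ∀ x : E, π x = 0 ↔ x ∈ Set.range ι)
    (s : G → E) (hs : ∀ g : G, π (s g) = g) :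
    ∃! η : G → G → G → A,
      (∀ x y z : G, ι (η x y z) = s x - s y + s z - s (x - y + z)) ∧
      (∀ x₁ x₂ x₃ x₄ x₅ : G,
        η x₁ x₂ x₃ + η (x₁ - x₂ + x₃) x₄ x₅ + η x₄ x₃ x₂
          - η x₁ (x₄ - x₃ + x₂) x₅ = 0) ∧
      (∀ x₁ x₂ x₃ x₄ x₅ : G,
        η x₃ x₄ x₅ + η x₁ x₂ (x₃ - x₄ + x₅) + η x₄ x₃ x₂
          - η x₁ (x₄ - x₃ + x₂) x₅ = 0) ∧
      (∀ x y : G, η x x y = 0) ∧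
      (∀ x y : G, η x y y = 0) := by
  have hmem : ∀ x y z : G, s x - s y + s z - s (x - y + z) ∈ Set.range ι := by
    intro x y z
    rw [← hexact]
    simp [hs]
  choose η hη using fun x y z => hmem x y z
  refine ⟨η, ⟨fun x y z => hη x y z, ?_, ?_, ?_, ?_⟩, ?_⟩
  · intro x₁ x₂ x₃ x₄ x₅
    apply hι
    simp only [map_add, map_sub, map_zero, hη]
    have : x₁ - x₂ + x₃ - x₄ + x₅ = x₁ - (x₄ - x₃ + x₂) + x₅ := by abel
    rw [this]; abel
  · intro x₁ x₂ x₃ x₄ x₅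
    apply hι
    simp only [map_add, map_sub, map_zero, hη]
    have : x₁ - x₂ + (x₃ - x₄ + x₅) = x₁ - (x₄ - x₃ + x₂) + x₅ := by abel
    rw [this]; abel
  · intro x y
    apply hι
    simp only [map_zero, hη]
    have : x - x + y = y := by abel
    rw [this]; abel
  · intro x y
    apply hι
    simp only [map_zero, hη]
    have : x - y + y = x := by abel
    rw [this]; abel
  · intro η' ⟨h1, _⟩
    funext x y z
    apply hι
    rw [h1, hη]
end

section
/- Let (X,T) be a ternary self-distributive set, A an abelian group, and η: X³ → A a function. Define on X × A the ternary operation T'((x,a),(y,b),(z,c)) = (T(x,y,z), a - b + c + η(x,y,z)). Then T' is ternary self-distributive if and only if η satisfies the TSD 2-cocycle condition: η(x₁,x₂,x₃) + η(T(x₁,x₂,x₃),x₄,x₅) = η(x₁,x₄,x₅) - η(x₂,x₄,x₅) + η(x₃,x₄,x₅) + η(T(x₁,x₄,x₅),T(x₂,x₄,x₅),T(x₃,x₄,x₅)) for all xᵢ ∈ X. -/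
/-- The extension of a TSD set by a 2-cochain is TSD iff the cochain is a
TSD 2-cocycle. -/
theorem tsd_extension_iff_cocycle {X : Type*} {A : Type*} [AddCommGroup A]
    (T : X → X → X → X)
    (hT : ∀ x y z u v : X, T (T x y z) u v = T (T x u v) (T y u v) (T z u v))
    (η : X → X → X → A) :
    let T' : X × A → X × A → X × A → X × A :=
      fun p q r => (T p.1 q.1 r.1, p.2 - q.2 + r.2 + η p.1 q.1 r.1)
    (∀ p q r s w : X × A, T' (T' p q r) s w = T' (T' p s w) (T' q s w) (T' r s w))
    ↔
    (∀ x₁ x₂ x₃ x₄ x₅ : X,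
      η x₁ x₂ x₃ + η (T x₁ x₂ x₃) x₄ x₅
        = η x₁ x₄ x₅ - η x₂ x₄ x₅ + η x₃ x₄ x₅
          + η (T x₁ x₄ x₅) (T x₂ x₄ x₅) (T x₃ x₄ x₅)) := by
  intro T'
  constructor
  · intro h x₁ x₂ x₃ x₄ x₅
    have := h (x₁, 0) (x₂, 0) (x₃, 0) (x₄, 0) (x₅, 0)
    have h2 := congrArg Prod.snd this
    simp only [T'] at h2
    abel_nf at h2 ⊢
    linear_combination (norm := abel_nf) h2
  · intro h p q r s w
    have h2 := h p.1 q.1 r.1 s.1 w.1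
    refine Prod.ext (hT _ _ _ _ _) ?_
    simp only [T']
    linear_combination (norm := abel_nf) h2
end

section
/- Let X be a heap, A an abelian group, and η: X³ → A a function satisfying the type 1 and type 2 heap 2-cocycle conditions and the degeneracy condition (η(x,x,y) = 0 = η(x,y,y)). Then η satisfies the TSD 2-cocycle condition for the TSD operation T = [-]: η(x₁,x₂,x₃) + η([x₁,x₂,x₃],x₄,x₅) = η(x₁,x₄,x₅) - η(x₂,x₄,x₅) + η(x₃,x₄,x₅) + η([x₁,x₄,x₅],[x₂,x₄,x₅],[x₃,x₄,x₅]). -/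
/-- A heap 2-cocycle (type 1 and type 2 conditions plus degeneracy) is a
TSD 2-cocycle for the TSD operation given by the heap operation. -/
theorem heap_cocycle_is_tsd_cocycle {X : Type*} {A : Type*} [AddCommGroup A] [Nonempty X]
    (t : X → X → X → X)
    (h0 : ∀ x y z u v : X, t (t x y z) u v = t x y (t z u v))
    (h1 : ∀ x y z u v : X, t (t x y z) u v = t x (t u z y) v)
    (h2 : ∀ x y z u v : X, t x y (t z u v) = t x (t u z y) v)
    (hd1 : ∀ x y : X, t x x y = y)
    (hd2 : ∀ x y : X, t x y y = x)
    (η : X → X → X → A)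
    (hc1 : ∀ x₁ x₂ x₃ x₄ x₅ : X,
      η x₁ x₂ x₃ + η (t x₁ x₂ x₃) x₄ x₅ + η x₄ x₃ x₂ - η x₁ (t x₄ x₃ x₂) x₅ = 0)
    (hc2 : ∀ x₁ x₂ x₃ x₄ x₅ : X,
      η x₃ x₄ x₅ + η x₁ x₂ (t x₃ x₄ x₅) + η x₄ x₃ x₂ - η x₁ (t x₄ x₃ x₂) x₅ = 0)
    (hdeg1 : ∀ x y : X, η x x y = 0)
    (hdeg2 : ∀ x y : X, η x y y = 0) :
    ∀ x₁ x₂ x₃ x₄ x₅ : X,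
      η x₁ x₂ x₃ + η (t x₁ x₂ x₃) x₄ x₅
        = η x₁ x₄ x₅ - η x₂ x₄ x₅ + η x₃ x₄ x₅
          + η (t x₁ x₄ x₅) (t x₂ x₄ x₅) (t x₃ x₄ x₅) := by
  intro x₁ x₂ x₃ x₄ x₅
  -- key heap identity: t (t x₂ x₄ x₅) x₅ x₄ = x₂
  have hkey : t (t x₂ x₄ x₅) x₅ x₄ = x₂ := by rw [h0, hd1, hd2]
  -- type 0 relation ingredients
  have a1 := hc1 x₁ x₂ x₃ x₄ x₅
  have a2 := hc2 x₁ x₂ x₃ x₄ x₅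
  -- relates η (t x₁ x₄ x₅) (t x₂ x₄ x₅) (t x₃ x₄ x₅) to η x₁ x₂ (t x₃ x₄ x₅)
  have c := hc1 x₁ x₄ x₅ (t x₂ x₄ x₅) (t x₃ x₄ x₅)
  rw [hkey] at c
  -- η (t x₂ x₄ x₅) x₅ x₄ = - η x₂ x₄ x₅
  have d := hc1 x₂ x₄ x₅ x₅ x₄
  rw [hd1, hdeg1, hdeg2] at d
  linear_combination (norm := abel1) a1 - a2 - c + d
end

section
/- Let H be an involutory Hopf algebra over a field k (S² = id). Then the linear map μ: H ⊗ H ⊗ H → H induced by x ⊗ y ⊗ z ↦ x·S(y)·z satisfies the type 1 para-associativity μ(μ(x⊗y⊗z)⊗u⊗v) = μ(x⊗μ(u⊗z⊗y)⊗v) and the degeneracy conditions μ(x ⊗ y⁽¹⁾ ⊗ y⁽²⁾) = ε(y)x and μ(x⁽¹⁾ ⊗ x⁽²⁾ ⊗ y) = ε(x)y (where Δ(y) = y⁽¹⁾ ⊗ y⁽²⁾ in Sweedler notation). -/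
open Coalgebra HopfAlgebra

namespace HopfAlgebra

variable {k H : Type*} [CommSemiring k] [Semiring H] [HopfAlgebra k H]

theorem mul_antipode_mul_antipode_mul_of_involutive
    (hS : Function.Involutive (antipode k : H → H)) (x y z u v : H) :
    x * antipode k y * z * antipode k u * v = x * antipode k (u * antipode k z * y) * v := by
  simp only [antipode_mul_antidistrib, hS _, mul_assoc]

theorem sum_mul_antipode_left_mul_right {ι : Type*} (x : H) {y : H} (r : Repr k y ι) :
    ∑ i ∈ r.index, x * antipode k (r.left i) * r.right i = counit (R := k) y • x := by
  simp only [mul_assoc, ← Finset.mul_sum, sum_antipode_mul_eq_smul, mul_smul_comm, mul_one]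

theorem sum_left_mul_antipode_right_mul {ι : Type*} {x : H} (r : Repr k x ι) (y : H) :
    ∑ i ∈ r.index, r.left i * antipode k (r.right i) * y = counit (R := k) x • y := by
  rw [← Finset.sum_mul, sum_mul_antipode_eq_smul, smul_mul_assoc, one_mul]

end HopfAlgebra

/-- For an involutory Hopf algebra `H` over a field `k`, the ternary operation
`μ(x ⊗ y ⊗ z) = x · S(y) · z` satisfies type 1 para-associativity and the two
degeneracy conditions (expressed via representations of the comultiplication,
i.e. Sweedler notation). -/
theorem involutory_hopf_heap_axioms (k : Type*) [Field k] (H : Type*)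
    [Ring H] [HopfAlgebra k H]
    (hS : ∀ a : H, antipode (R := k) (antipode (R := k) a) = a) :
    let μ : H → H → H → H := fun x y z => x * antipode (R := k) y * z
    (∀ x y z u v : H, μ (μ x y z) u v = μ x (μ u z y) v) ∧
    (∀ x y : H, ∀ (ι : Type*) (r : Coalgebra.Repr k y ι),
      ∑ i ∈ r.index, μ x (r.left i) (r.right i) = counit (R := k) y • x) ∧
    (∀ x y : H, ∀ (ι : Type*) (r : Coalgebra.Repr k x ι),
      ∑ i ∈ r.index, μ (r.left i) (r.right i) y = counit (R := k) x • y) :=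
  ⟨mul_antipode_mul_antipode_mul_of_involutive hS,
    fun x _ _ r => sum_mul_antipode_left_mul_right x r,
    fun _ y _ r => sum_left_mul_antipode_right_mul r y⟩
end

section
/- Let H be an involutory Hopf algebra over a field k with μ(x⊗y⊗z) = x·S(y)·z. Then μ is categorically ternary self-distributive: for all x₁,...,x₅ ∈ H (with Sweedler notation for iterated comultiplication applied to x₄, x₅), μ(μ(x₁⊗x₄⁽¹²⁾⊗x₅⁽¹²⁾) ⊗ μ(x₂⊗x₄⁽¹¹⁾⊗x₅⁽¹¹⁾) ⊗ μ(x₃⊗x₄⁽²⁾⊗x₅⁽²⁾)) = μ(μ(x₁⊗x₂⊗x₃)⊗x₄⊗x₅). -/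
/-!
Since `S` is an anti-homomorphism with `S² = id`, the left-hand side expands to
`x₁ S(x₄⁽¹²⁾) x₅⁽¹²⁾ S(x₅⁽¹¹⁾) x₄⁽¹¹⁾ S(x₂) x₃ S(x₄⁽²⁾) x₅⁽²⁾`. Applying `S` to the antipode axioms
shows that for involutory `H` they also hold with the two tensor factors swapped,
`x⁽²⁾ S(x⁽¹⁾) = S(x⁽²⁾) x⁽¹⁾ = ε(x) 1`, so the middle collapses to `ε(x₄⁽¹⁾) ε(x₅⁽¹⁾)`, and the
counit axiom turns what is left into `x₁ S(x₂) x₃ S(x₄) x₅`.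
-/

open Coalgebra HopfAlgebra

namespace HopfAlgebra

variable {R H : Type*} [CommSemiring R] [Semiring H] [HopfAlgebra R H] {a : H} {ι : Type*}

theorem sum_right_mul_antipode_left_eq_smul (hS : Function.Involutive (antipode R : H → H))
    (r : Repr R a ι) :
    ∑ i ∈ r.index, r.right i * antipode R (r.left i) = counit (R := R) a • 1 := by
  calc ∑ i ∈ r.index, r.right i * antipode R (r.left i)
      = antipode R (∑ i ∈ r.index, r.left i * antipode R (r.right i)) := by
        simp [antipode_mul_antidistrib, hS _]
    _ = counit (R := R) a • 1 := by rw [sum_mul_antipode_eq_smul, map_smul, antipode_one]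

theorem sum_antipode_right_mul_left_eq_smul (hS : Function.Involutive (antipode R : H → H))
    (r : Repr R a ι) :
    ∑ i ∈ r.index, antipode R (r.right i) * r.left i = counit (R := R) a • 1 := by
  calc ∑ i ∈ r.index, antipode R (r.right i) * r.left i
      = antipode R (∑ i ∈ r.index, antipode R (r.left i) * r.right i) := by
        simp [antipode_mul_antidistrib, hS _]
    _ = counit (R := R) a • 1 := by rw [sum_antipode_mul_eq_smul, map_smul, antipode_one]

/-- `μ(μ(x ⊗ y⁽²⁾ ⊗ z⁽²⁾) ⊗ z⁽¹⁾ ⊗ y⁽¹⁾) = ε(y) ε(z) x`. -/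
theorem sum_sum_mul_antipode_mul_mul_antipode_mul_eq_smul
    (hS : Function.Involutive (antipode R : H → H)) (x : H) {y z : H} {κ : Type*}
    (ry : Repr R y ι) (rz : Repr R z κ) :
    ∑ i ∈ ry.index, ∑ j ∈ rz.index,
      x * antipode R (ry.right i) * rz.right j * antipode R (rz.left j) * ry.left i
      = counit (R := R) y • counit (R := R) z • x := by
  calc _ = ∑ i ∈ ry.index, x * antipode R (ry.right i) *
          (∑ j ∈ rz.index, rz.right j * antipode R (rz.left j)) * ry.left i := by
        simp only [Finset.mul_sum, Finset.sum_mul, mul_assoc]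
    _ = counit (R := R) z • x * ∑ i ∈ ry.index, antipode R (ry.right i) * ry.left i := by
        simp only [sum_right_mul_antipode_left_eq_smul hS rz, Finset.mul_sum, mul_smul_comm,
          smul_mul_assoc, mul_one, mul_assoc]
    _ = counit (R := R) y • counit (R := R) z • x := by
        rw [sum_antipode_right_mul_left_eq_smul hS ry, mul_smul_comm, mul_one]

end HopfAlgebra

theorem Coalgebra.Repr.sum_counit_smul_map {R A M : Type*} [CommSemiring R] [AddCommMonoid A]
    [Module R A] [Coalgebra R A] [AddCommMonoid M] [Module R M] {a : A} {ι : Type*}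
    (r : Repr R a ι) (f : A →ₗ[R] M) :
    ∑ i ∈ r.index, counit (R := R) (r.left i) • f (r.right i) = f a := by
  simp_rw [← map_smul, ← map_sum, sum_counit_smul]

/-- For an involutory Hopf algebra `H` over a field `k`, the operation
`μ(x ⊗ y ⊗ z) = x · S(y) · z` is categorically ternary self-distributive:
`μ(μ(x₁⊗x₄⁽¹²⁾⊗x₅⁽¹²⁾) ⊗ μ(x₂⊗x₄⁽¹¹⁾⊗x₅⁽¹¹⁾) ⊗ μ(x₃⊗x₄⁽²⁾⊗x₅⁽²⁾))
  = μ(μ(x₁⊗x₂⊗x₃)⊗x₄⊗x₅)`,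
where the Sweedler components of `x₄` and `x₅` are expressed via arbitrary
representations of the (iterated) comultiplication. -/
theorem involutory_hopf_tsd (k : Type*) [Field k] (H : Type*)
    [Ring H] [HopfAlgebra k H]
    (hS : ∀ a : H, antipode (R := k) (antipode (R := k) a) = a) :
    let μ : H → H → H → H := fun x y z => x * antipode (R := k) y * z
    ∀ x₁ x₂ x₃ x₄ x₅ : H,
    ∀ ι₄ : Type _, ∀ r₄ : Coalgebra.Repr k x₄ ι₄, ∀ ι₅ : Type _, ∀ r₅ : Coalgebra.Repr k x₅ ι₅,
    ∀ κ₄ : ι₄ → Type _, ∀ r₄l : (i : ι₄) → Coalgebra.Repr k (r₄.left i) (κ₄ i),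
    ∀ κ₅ : ι₅ → Type _, ∀ r₅l : (j : ι₅) → Coalgebra.Repr k (r₅.left j) (κ₅ j),
      ∑ i ∈ r₄.index, ∑ j ∈ r₅.index, ∑ a ∈ (r₄l i).index, ∑ b ∈ (r₅l j).index,
        μ (μ x₁ ((r₄l i).right a) ((r₅l j).right b))
          (μ x₂ ((r₄l i).left a) ((r₅l j).left b))
          (μ x₃ (r₄.right i) (r₅.right j))
      = μ (μ x₁ x₂ x₃) x₄ x₅ := by
  intro μ x₁ x₂ x₃ x₄ x₅ ι₄ r₄ ι₅ r₅ κ₄ r₄l κ₅ r₅l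
  calc _ = ∑ i ∈ r₄.index, ∑ j ∈ r₅.index,
          (∑ a ∈ (r₄l i).index, ∑ b ∈ (r₅l j).index,
            x₁ * antipode k ((r₄l i).right a) * (r₅l j).right b *
              antipode k ((r₅l j).left b) * (r₄l i).left a) *
          (antipode k x₂ * x₃ * antipode k (r₄.right i) * r₅.right j) := by
        simp only [μ, Finset.sum_mul, antipode_mul_antidistrib, hS, mul_assoc]
    _ = ∑ i ∈ r₄.index, counit (R := k) (r₄.left i) • ∑ j ∈ r₅.index,
          counit (R := k) (r₅.left j) •
            (x₁ * antipode k x₂ * x₃ * antipode k (r₄.right i) * r₅.right j) := by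
        simp only [sum_sum_mul_antipode_mul_mul_antipode_mul_eq_smul hS]
        simp only [smul_mul_assoc, Finset.smul_sum, mul_assoc]
    _ = ∑ i ∈ r₄.index, counit (R := k) (r₄.left i) •
          (x₁ * antipode k x₂ * x₃ * antipode k (r₄.right i) * x₅) :=
        Finset.sum_congr rfl fun i _ =>
          congrArg _ (r₅.sum_counit_smul_map (LinearMap.mulLeft k _))
    _ = x₁ * antipode k x₂ * x₃ * antipode k x₄ * x₅ :=
        r₄.sum_counit_smul_map
          (LinearMap.mulRight k x₅ ∘ₗ LinearMap.mulLeft k _ ∘ₗ antipode k)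
end
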